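/- Let V be a vector space over a field F with a symmetric bilinear form b that is nondegenerate (b(x,z) = 0 for all z implies x = 0), and a bilinear multiplication ∗ satisfying the associativity-of-the-form identity b(x ∗ y, z) = b(x, y ∗ z) for all x, y, z. Suppose g₁, g₂, g₃ are linear bijections of V such that g₁ and g₂ preserve b (i.e., b(gᵢ x, gᵢ y) = b(x,y)) and g₁(x ∗ y) = g₂(x) ∗ g₃(y) for all x, y ∈ V. Then g₂(x ∗ y) = g₃(x) ∗ g₁(y) for all x, y ∈ V. -/
import Mathlib

/-- The cyclic-shift property underlying the triality automorphism: if `b` is a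
nondegenerate symmetric bilinear form, `∗` satisfies `b(x∗y, z) = b(x, y∗z)`,
the bijections `g₁, g₂` preserve `b` and `g₁(x∗y) = g₂ x ∗ g₃ y`, then
`g₂(x∗y) = g₃ x ∗ g₁ y`. -/
theorem triality_cyclic_shift (F : Type*) [Field F] (V : Type*) [AddCommGroup V]
    [Module F V] (b : V →ₗ[F] V →ₗ[F] F) (m : V →ₗ[F] V →ₗ[F] V)
    (hsymm : ∀ x y, b x y = b y x)
    (hnd : ∀ x, (∀ z, b x z = 0) → x = 0)
    (hassoc : ∀ x y z, b (m x y) z = b x (m y z))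
    (g₁ g₂ g₃ : V ≃ₗ[F] V)
    (hg₁ : ∀ x y, b (g₁ x) (g₁ y) = b x y)
    (hg₂ : ∀ x y, b (g₂ x) (g₂ y) = b x y)
    (h : ∀ x y, g₁ (m x y) = m (g₂ x) (g₃ y)) :
    ∀ x y, g₂ (m x y) = m (g₃ x) (g₁ y) := by
  intro x y
  have key : ∀ z, b (g₂ (m x y) - m (g₃ x) (g₁ y)) z = 0 := by
    intro z
    obtain ⟨u, rfl⟩ := g₂.surjective z
    have e1 : b (g₂ u) (m (g₃ x) (g₁ y)) = b (g₂ u) (g₂ (m x y)) := by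
      calc b (g₂ u) (m (g₃ x) (g₁ y)) = b (m (g₂ u) (g₃ x)) (g₁ y) := (hassoc _ _ _).symm
        _ = b (g₁ (m u x)) (g₁ y) := by rw [h]
        _ = b (m u x) y := hg₁ _ _
        _ = b u (m x y) := hassoc _ _ _
        _ = b (g₂ u) (g₂ (m x y)) := (hg₂ _ _).symm
    simp only [map_sub, LinearMap.sub_apply]
    rw [hsymm (g₂ (m x y)), hsymm (m (g₃ x) (g₁ y)), e1, sub_self]
  exact sub_eq_zero.mp (hnd _ key)
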